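/- Let A be an n×n matrix over ℝ∪{−∞} with max-plus spectral radius λ > −∞. A vector x ∈ ℝⁿ satisfies max_{1≤i,j≤n}(A_{ij} + x_j − x_i) = λ if and only if there exists u ∈ ℝⁿ such that for every i: x_i = max over m = 0, 1, …, n−1 and over all sequences i = k_0, k_1, …, k_m in {1,…,n} of ( A_{k_0k_1} + ⋯ + A_{k_{m−1}k_m} − m·λ + u_{k_m} ), where for m = 0 the term is u_i. -/

import Mathlib

/-!
Max-plus semifield modeled as `WithBot ℝ` (= ℝ ∪ {−∞}).
The Kleene star of λ⁻¹A, i.e. of the matrix with entries −λ + A_{ij}, has (i,j) entry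
equal to the maximum over m = 0,…,n−1 and all sequences i = k_0, …, k_m = j of
A_{k_0k_1} + ⋯ + A_{k_{m−1}k_m} − m·λ, so that x = (λ⁻¹A)*u reads
x_i = max over such m, sequences and endpoints k_m of (weight − m·λ + u_{k_m}).
-/

/-- Max-plus matrix product: (A⊗B)_{ij} = max_k (A_{ik} + B_{kj}). -/
noncomputable def mmul {n : ℕ} (A B : Fin n → Fin n → WithBot ℝ) :
    Fin n → Fin n → WithBot ℝ :=
  fun i j => Finset.univ.sup fun k => A i k + B k j

/-- Max-plus matrix powers, with A⁰ = I (0 on the diagonal, −∞ elsewhere). -/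
noncomputable def mpow {n : ℕ} (A : Fin n → Fin n → WithBot ℝ) :
    ℕ → Fin n → Fin n → WithBot ℝ
  | 0 => fun i j => if i = j then (0 : WithBot ℝ) else ⊥
  | m + 1 => mmul (mpow A m) A

/-- Kleene star: (A*)_{ij} = max_{0 ≤ m ≤ n−1} (A^m)_{ij}. -/
noncomputable def mstar {n : ℕ} (A : Fin n → Fin n → WithBot ℝ) :
    Fin n → Fin n → WithBot ℝ :=
  fun i j => (Finset.range n).sup fun m => mpow A m i j

/-- Max-plus spectral radius (maximum cycle mean):
λ = max_{1 ≤ m ≤ n} (1/m)·max_i (A^m)_{ii}, computed in ℝ ∪ {−∞}. -/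
noncomputable def specRad {n : ℕ} (A : Fin n → Fin n → WithBot ℝ) : WithBot ℝ :=
  (Finset.Icc 1 n).sup fun m =>
    WithBot.map (fun r => r / (m : ℝ)) (Finset.univ.sup fun i => mpow A m i i)

/-! Write `G(x) = max_{i,j} (A_{ij} + x_j - x_i)`. For real `g`, `G(x) ≤ g` says exactly that
`x` is a subeigenvector of `g⁻¹A`, i.e. `A_{ij} - g + x_j ≤ x_i`; telescoping along a closed walk
shows that then no closed walk of `g⁻¹A` has positive weight, which is `λ ≤ g`. Hence `λ ≤ G(x)`
for every real `x`, and `G(x) = λ` iff `x` is a subeigenvector of `M = λ⁻¹A`.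

Since `M` has no positive cycles, a walk of length `n` repeats a vertex and loses nothing when the
cycle is cut out, so `M^n ≤ M*` and `M ⊗ M* ≤ M*`. Thus every `M* u` is a subeigenvector, and
conversely a subeigenvector satisfies `M^m x ≤ x` for all `m`, whence `x = M* x`. -/

open Finset

theorem withBot_add_finset_sup {ι α : Type*} [AddCommMonoid α] [LinearOrder α]
    [IsOrderedAddMonoid α] (s : Finset ι) (f : ι → WithBot α) (c : WithBot α) :
    c + s.sup f = s.sup fun i => c + f i :=
  apply_sup_eq_sup_comp_of_linearOrder (c + ·) (fun _ _ h => add_le_add_right h c)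
    (WithBot.add_bot c)

theorem withBot_finset_sup_add {ι α : Type*} [AddCommMonoid α] [LinearOrder α]
    [IsOrderedAddMonoid α] (s : Finset ι) (f : ι → WithBot α) (c : WithBot α) :
    s.sup f + c = s.sup fun i => f i + c := by
  simp only [add_comm _ c, withBot_add_finset_sup]

theorem WithBot.map_div_le_coe_iff {r : ℝ} (hr : 0 < r) (a : WithBot ℝ) (g : ℝ) :
    a.map (· / r) ≤ (g : WithBot ℝ) ↔ a ≤ ((r * g : ℝ) : WithBot ℝ) := by
  cases a with
  | bot => simp
  | coe a => rw [WithBot.map_coe, WithBot.coe_le_coe, WithBot.coe_le_coe, div_le_iff₀' hr]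

theorem coe_mul_neg_add_nonpos_iff (a : WithBot ℝ) (r g : ℝ) :
    ((r * -g : ℝ) : WithBot ℝ) + a ≤ 0 ↔ a ≤ ((r * g : ℝ) : WithBot ℝ) := by
  cases a with
  | bot => simp
  | coe a =>
    norm_cast
    constructor <;> intro <;> linarith

theorem coe_neg_add_add_coe_le_coe_iff (a : WithBot ℝ) (g y z : ℝ) :
    ((-g : ℝ) : WithBot ℝ) + a + (y : WithBot ℝ) ≤ (z : WithBot ℝ) ↔
      a + ((y - z : ℝ) : WithBot ℝ) ≤ (g : WithBot ℝ) := by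
  cases a with
  | bot => simp
  | coe a =>
    norm_cast
    constructor <;> intro <;> linarith

section MaxPlus

variable {n : ℕ} (M : Fin n → Fin n → WithBot ℝ)

def CyclesNonpos : Prop :=
  ∀ m, 1 ≤ m → m ≤ n → ∀ i, mpow M m i i ≤ 0

theorem mpow_succ_apply (m : ℕ) (i j : Fin n) :
    mpow M (m + 1) i j = univ.sup fun k => mpow M m i k + M k j :=
  rfl

theorem mpow_one : mpow M 1 = M := by
  funext i j
  rw [mpow_succ_apply]
  apply le_antisymm
  · exact Finset.sup_le fun k _ => by by_cases h : i = k <;> simp [mpow, h]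
  · simpa [mpow] using le_sup (f := fun k => mpow M 0 i k + M k j) (mem_univ i)

theorem mpow_add_le (a b : ℕ) (i k j : Fin n) :
    mpow M a i k + mpow M b k j ≤ mpow M (a + b) i j := by
  induction b generalizing j with
  | zero => rcases eq_or_ne k j with rfl | h <;> simp [mpow, *]
  | succ b ih =>
    rw [← add_assoc, mpow_succ_apply, mpow_succ_apply, withBot_add_finset_sup]
    refine Finset.sup_le fun t _ => ?_
    rw [← add_assoc]
    exact (add_le_add_left (ih t) _).trans
      (le_sup (f := fun t => mpow M (a + b) i t + M t j) (mem_univ t))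

theorem mpow_const_add (c : ℝ) (m : ℕ) (i j : Fin n) :
    mpow (fun a b => (c : WithBot ℝ) + M a b) m i j =
      ((m * c : ℝ) : WithBot ℝ) + mpow M m i j := by
  induction m generalizing j with
  | zero => by_cases h : i = j <;> simp [mpow, h]
  | succ m ih =>
    rw [mpow_succ_apply, mpow_succ_apply, withBot_add_finset_sup]
    refine Finset.sup_congr rfl fun k _ => ?_
    rw [ih, show ((m + 1 : ℕ) : ℝ) * c = m * c + c by push_cast; ring, WithBot.coe_add]
    abel

theorem mpow_le_mstar_of_lt {m : ℕ} (hm : m < n) (i j : Fin n) : mpow M m i j ≤ mstar M i j :=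
  le_sup (f := fun m => mpow M m i j) (mem_range.2 hm)

def pathWeight (c : ℕ → Fin n) (p : ℕ) : WithBot ℝ :=
  ∑ t ∈ range p, M (c t) (c (t + 1))

theorem pathWeight_succ (c : ℕ → Fin n) (p : ℕ) :
    pathWeight M c (p + 1) = pathWeight M c p + M (c p) (c (p + 1)) :=
  sum_range_succ _ _

theorem pathWeight_add (c : ℕ → Fin n) (p q : ℕ) :
    pathWeight M c (p + q) = pathWeight M c p + pathWeight M (fun t => c (p + t)) q := by
  simp only [pathWeight, sum_range_add, add_assoc]

theorem pathWeight_le_mpow (c : ℕ → Fin n) (p : ℕ) : pathWeight M c p ≤ mpow M p (c 0) (c p) := by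
  induction p with
  | zero => simp [pathWeight, mpow]
  | succ p ih =>
    rw [pathWeight_succ, mpow_succ_apply]
    exact (add_le_add_left ih _).trans
      (le_sup (f := fun k => mpow M p (c 0) k + M k (c (p + 1))) (mem_univ (c p)))

theorem exists_pathWeight_eq_mpow {p : ℕ} {i j : Fin n} (h : mpow M p i j ≠ ⊥) :
    ∃ c : ℕ → Fin n, c 0 = i ∧ c p = j ∧ pathWeight M c p = mpow M p i j := by
  induction p generalizing j with
  | zero =>
    by_cases hij : i = j
    · exact ⟨fun _ => i, rfl, hij, by simp [pathWeight, mpow, hij]⟩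
    · simp [mpow, hij] at h
  | succ p ih =>
    obtain ⟨k, -, hk⟩ := exists_mem_eq_sup univ ⟨i, mem_univ i⟩ fun k => mpow M p i k + M k j
    rw [mpow_succ_apply, hk] at h ⊢
    obtain ⟨c, hc0, hcp, hc⟩ := ih (WithBot.add_ne_bot.1 h).1
    refine ⟨Function.update c (p + 1) j, by simp [hc0], by simp, ?_⟩
    rw [pathWeight_succ, ← hc, ← hcp, Function.update_self,
      Function.update_of_ne (by omega : p ≠ p + 1)]
    congr 1
    refine sum_congr rfl fun t ht => ?_
    have ht : t < p := mem_range.1 ht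
    rw [Function.update_of_ne (by omega), Function.update_of_ne (by omega)]

theorem mpow_le_mstar (hM : CyclesNonpos M) (i j : Fin n) : mpow M n i j ≤ mstar M i j := by
  by_cases hbot : mpow M n i j = ⊥
  · simp [hbot]
  obtain ⟨c, rfl, rfl, hc⟩ := exists_pathWeight_eq_mpow M hbot
  obtain ⟨a, b, hab, hbn, hcab⟩ : ∃ a b, a < b ∧ b ≤ n ∧ c a = c b := by
    obtain ⟨a, ha, b, hb, hne, heq⟩ := exists_ne_map_eq_of_card_lt_of_maps_to
      (s := range (n + 1)) (t := univ) (f := c) (by simp) (by simp [Set.MapsTo])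
    rw [mem_range] at ha hb
    rcases hne.lt_or_gt with h | h
    · exact ⟨a, b, h, by omega, heq⟩
    · exact ⟨b, a, h, by omega, heq.symm⟩
  obtain ⟨d, rfl⟩ := Nat.exists_eq_add_of_lt hab
  obtain ⟨e, he⟩ := Nat.exists_eq_add_of_le hbn
  -- the walk splits at the repeated vertex `c a` into a prefix, a cycle and a suffix
  have hsplit : pathWeight M c n = pathWeight M c a + (pathWeight M (fun t => c (a + t)) (d + 1) +
      pathWeight M (fun t => c (a + (d + 1 + t))) e) := by
    rw [congrArg (pathWeight M c) (show n = a + (d + 1 + e) by omega), pathWeight_add,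
      pathWeight_add]
  have hcn : c (a + d + 1 + e) = c n := congrArg c (by omega)
  calc mpow M n (c 0) (c n) = pathWeight M c n := hc.symm
    _ ≤ mpow M a (c 0) (c a) + (mpow M (d + 1) (c a) (c a) + mpow M e (c a) (c n)) := by
      rw [hsplit]
      gcongr
      · exact pathWeight_le_mpow M c a
      · simpa [← add_assoc, ← hcab] using pathWeight_le_mpow M (fun t => c (a + t)) (d + 1)
      · simpa [← add_assoc, ← hcab, hcn] using
          pathWeight_le_mpow M (fun t => c (a + (d + 1 + t))) e
    _ ≤ mpow M a (c 0) (c a) + mpow M e (c a) (c n) := by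
      gcongr
      exact add_le_of_nonpos_left (hM (d + 1) (by omega) (by omega) (c a))
    _ ≤ mpow M (a + e) (c 0) (c n) := mpow_add_le M a e _ _ _
    _ ≤ mstar M (c 0) (c n) := mpow_le_mstar_of_lt M (by omega) _ _

theorem add_mstar_le (hM : CyclesNonpos M) (i j k : Fin n) :
    M i j + mstar M j k ≤ mstar M i k := by
  simp only [mstar]
  rw [withBot_add_finset_sup]
  refine Finset.sup_le fun m hm => ?_
  have hstep : M i j + mpow M m j k ≤ mpow M (1 + m) i k := by
    simpa only [mpow_one] using mpow_add_le M 1 m i j k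
  rcases (show 1 + m < n ∨ 1 + m = n by have := mem_range.1 hm; omega) with h | h
  · exact hstep.trans (mpow_le_mstar_of_lt M h i k)
  · rw [h] at hstep
    exact hstep.trans (mpow_le_mstar M hM i k)

variable {M} {x : Fin n → ℝ}

theorem mpow_add_le_of_forall_add_le (hx : ∀ i j, M i j + (x j : WithBot ℝ) ≤ (x i : WithBot ℝ))
    (m : ℕ) (i j : Fin n) : mpow M m i j + (x j : WithBot ℝ) ≤ (x i : WithBot ℝ) := by
  induction m generalizing j with
  | zero => rcases eq_or_ne i j with rfl | h <;> simp [mpow, *]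
  | succ m ih =>
    rw [mpow_succ_apply, withBot_finset_sup_add]
    refine Finset.sup_le fun k _ => ?_
    rw [add_assoc]
    exact (add_le_add_right (hx k j) _).trans (ih k)

theorem eq_sup_mstar_add_of_forall_add_le
    (hx : ∀ i j, M i j + (x j : WithBot ℝ) ≤ (x i : WithBot ℝ)) (i : Fin n) :
    (x i : WithBot ℝ) = univ.sup fun j => mstar M i j + (x j : WithBot ℝ) := by
  apply le_antisymm
  · calc (x i : WithBot ℝ) = mpow M 0 i i + (x i : WithBot ℝ) := by simp [mpow]
      _ ≤ mstar M i i + (x i : WithBot ℝ) := by gcongr; exact mpow_le_mstar_of_lt M i.pos i i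
      _ ≤ _ := le_sup (f := fun j => mstar M i j + (x j : WithBot ℝ)) (mem_univ i)
  · refine Finset.sup_le fun j _ => ?_
    simp only [mstar]
    rw [withBot_finset_sup_add]
    exact Finset.sup_le fun m _ => mpow_add_le_of_forall_add_le hx m i j

theorem forall_add_le_of_eq_sup_mstar_add (hM : CyclesNonpos M) {u : Fin n → ℝ}
    (hu : ∀ i, (x i : WithBot ℝ) = univ.sup fun j => mstar M i j + (u j : WithBot ℝ))
    (i j : Fin n) : M i j + (x j : WithBot ℝ) ≤ (x i : WithBot ℝ) := by
  rw [hu i, hu j, withBot_add_finset_sup]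
  refine Finset.sup_le fun k _ => ?_
  rw [← add_assoc]
  exact (add_le_add_left (add_mstar_le M hM i j k) _).trans
    (le_sup (f := fun k => mstar M i k + (u k : WithBot ℝ)) (mem_univ k))

theorem forall_add_le_iff_exists_eq_sup_mstar_add (hM : CyclesNonpos M) :
    (∀ i j, M i j + (x j : WithBot ℝ) ≤ (x i : WithBot ℝ)) ↔
      ∃ u : Fin n → ℝ, ∀ i, (x i : WithBot ℝ) = univ.sup fun j => mstar M i j + (u j : WithBot ℝ) :=
  ⟨fun hx => ⟨x, eq_sup_mstar_add_of_forall_add_le hx⟩,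
    fun ⟨_, hu⟩ => forall_add_le_of_eq_sup_mstar_add hM hu⟩

end MaxPlus

theorem specRad_le_coe_iff {n : ℕ} (A : Fin n → Fin n → WithBot ℝ) (g : ℝ) :
    specRad A ≤ (g : WithBot ℝ) ↔ CyclesNonpos fun a b => ((-g : ℝ) : WithBot ℝ) + A a b := by
  unfold specRad CyclesNonpos
  simp only [Finset.sup_le_iff, mem_Icc, and_imp, mpow_const_add]
  refine forall_congr' fun m => imp_congr_right fun hm => forall_congr' fun _ => ?_
  rw [WithBot.map_div_le_coe_iff (by exact_mod_cast hm), Finset.sup_le_iff]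
  simp only [mem_univ, true_imp_iff, coe_mul_neg_add_nonpos_iff]

theorem sup_add_sub_le_coe_iff {n : ℕ} (A : Fin n → Fin n → WithBot ℝ) (x : Fin n → ℝ) (g : ℝ) :
    (univ.sup fun i => univ.sup fun j => A i j + ((x j - x i : ℝ) : WithBot ℝ)) ≤ (g : WithBot ℝ) ↔
      ∀ i j, ((-g : ℝ) : WithBot ℝ) + A i j + (x j : WithBot ℝ) ≤ (x i : WithBot ℝ) := by
  simp only [Finset.sup_le_iff, mem_univ, true_imp_iff, coe_neg_add_add_coe_le_coe_iff]

theorem specRad_le_sup_add_sub {n : ℕ} (A : Fin n → Fin n → WithBot ℝ) (x : Fin n → ℝ) :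
    specRad A ≤ univ.sup fun i => univ.sup fun j => A i j + ((x j - x i : ℝ) : WithBot ℝ) := by
  refine WithBot.forall_le_coe_iff_le.1 fun g hg => (specRad_le_coe_iff A g).2 ?_
  intro m _ _ i
  have hx := mpow_add_le_of_forall_add_le ((sup_add_sub_le_coe_iff A x g).1 hg) m i i
  rwa [← WithBot.add_le_add_iff_right (WithBot.coe_ne_bot (a := x i)), zero_add]

/-- All minimizers of G(x) = max_{i,j}(A_{ij} + x_j − x_i): G(x) = λ iff
x = (λ⁻¹A)*u for some u ∈ ℝⁿ. -/
theorem stmt_17 {n : ℕ} (A : Fin n → Fin n → WithBot ℝ) (l : ℝ)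
    (hl : ((l : ℝ) : WithBot ℝ) = specRad A) (x : Fin n → ℝ) :
    (Finset.univ.sup fun i => Finset.univ.sup fun j =>
        A i j + ((x j - x i : ℝ) : WithBot ℝ)) = ((l : ℝ) : WithBot ℝ) ↔
      ∃ u : Fin n → ℝ, ∀ i,
        ((x i : ℝ) : WithBot ℝ) =
          Finset.univ.sup fun j =>
            mstar (fun a b => ((-l : ℝ) : WithBot ℝ) + A a b) i j +
              ((u j : ℝ) : WithBot ℝ) := by
  have hM := (specRad_le_coe_iff A l).1 hl.ge
  rw [← forall_add_le_iff_exists_eq_sup_mstar_add hM, le_antisymm_iff, sup_add_sub_le_coe_iff, hl]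
  exact and_iff_left (specRad_le_sup_add_sub A x)
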